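/- Let F : [a,b] → [0,1] be a continuous strictly increasing distribution function with F(a)=0, F(b)=1 and a > 0. For x ∈ [a,b) define the conditional distribution Φ(v|x) = (F(v) − F(x))/(1 − F(x)) on [x,b], with generalized inverse Φ⁻¹(s|x), and set I(x) = ∫₀¹ 1/Φ⁻¹(s|x) ds. Then I is strictly decreasing in x on [a,b). -/

import Mathlib

/-!
For `x < y` and `0 < s < 1`, the conditional quantile `Φ⁻¹(s|y)` is a point `q ≥ y` with
`Φ(q|y) ≥ s`; since `Φ(q|x) > Φ(q|y)` when `F q < 1` (and `Φ(b|x) = 1 > s` otherwise), the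
intermediate value theorem gives a point of `[x, q)` where `Φ(·|x)` already reaches `s`. Hence
`Φ⁻¹(s|x) < Φ⁻¹(s|y)` on all of `(0, 1)`, and both quantiles are monotone in `s` and bounded
below by `a > 0`, so their reciprocals are integrable and the integrals compare strictly.
-/

open Set MeasureTheory

noncomputable def genInv (φ : ℝ → ℝ) (x b s : ℝ) : ℝ :=
  sInf {t | t ∈ Icc x b ∧ s ≤ φ t}

/-- `truncCDF F x v` is `Φ(v|x)`, and `genInv (truncCDF F x) x b s` is `Φ⁻¹(s|x)`. -/
noncomputable def truncCDF (F : ℝ → ℝ) (x v : ℝ) : ℝ :=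
  (F v - F x) / (1 - F x)

section genInv

variable {φ : ℝ → ℝ} {x b s t : ℝ}

theorem genInv_le (ht : t ∈ Icc x b) (hs : s ≤ φ t) : genInv φ x b s ≤ t :=
  csInf_le ⟨x, fun _ hu => hu.1.1⟩ ⟨ht, hs⟩

theorem genInv_mem (hxb : x ≤ b) (hφ : ContinuousOn φ (Icc x b)) (hs : s ≤ φ b) :
    genInv φ x b s ∈ {t | t ∈ Icc x b ∧ s ≤ φ t} := by
  have hclosed : IsClosed {t | t ∈ Icc x b ∧ s ≤ φ t} :=
    hφ.preimage_isClosed_of_isClosed isClosed_Icc isClosed_Ici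
  exact hclosed.csInf_mem ⟨b, ⟨hxb, le_rfl⟩, hs⟩ ⟨x, fun _ hu => hu.1.1⟩

theorem genInv_mono {s' : ℝ} (hxb : x ≤ b) (hφ : ContinuousOn φ (Icc x b)) (hs' : s' ≤ φ b)
    (hss' : s ≤ s') : genInv φ x b s ≤ genInv φ x b s' :=
  have hmem := genInv_mem hxb hφ hs'
  genInv_le hmem.1 (hss'.trans hmem.2)

theorem genInv_lt (ht : t ∈ Icc x b) (hφ : ContinuousOn φ (Icc x t)) (hxs : φ x ≤ s)
    (hst : s < φ t) : genInv φ x b s < t := by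
  obtain ⟨u, hu, hφu⟩ := intermediate_value_Icc ht.1 hφ ⟨hxs, hst.le⟩
  have hut : u < t := lt_of_le_of_ne hu.2 (by rintro rfl; exact hst.ne' hφu)
  exact (genInv_le ⟨hu.1, hu.2.trans ht.2⟩ hφu.ge).trans_lt hut

end genInv

theorem truncCDF_lt_truncCDF {F : ℝ → ℝ} {x y t : ℝ} (hxy : F x < F y) (hy : F y < 1)
    (ht : F t < 1) : truncCDF F y t < truncCDF F x t := by
  unfold truncCDF
  rw [div_lt_div_iff₀ (by linarith) (by linarith)]
  nlinarith [mul_pos (sub_pos.2 hxy) (sub_pos.2 ht)]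

section truncated

variable {a b : ℝ} {F : ℝ → ℝ} {x y s : ℝ}

theorem truncCDF_right (hFb : F b = 1) (hx : F x < 1) : truncCDF F x b = 1 := by
  rw [truncCDF, hFb, div_self (sub_ne_zero.2 hx.ne')]

theorem continuousOn_truncCDF (hFc : ContinuousOn F (Icc a b)) (hx : a ≤ x) :
    ContinuousOn (truncCDF F x) (Icc x b) :=
  ((hFc.mono (Icc_subset_Icc_left hx)).sub continuousOn_const).div_const _

theorem StrictMonoOn.apply_lt_one (hFm : StrictMonoOn F (Icc a b)) (hFb : F b = 1)
    (hx : x ∈ Ico a b) : F x < 1 :=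
  hFb ▸ hFm ⟨hx.1, hx.2.le⟩ ⟨hx.1.trans hx.2.le, le_rfl⟩ hx.2

theorem genInv_truncCDF_mem (hFc : ContinuousOn F (Icc a b)) (hFm : StrictMonoOn F (Icc a b))
    (hFb : F b = 1) (hx : x ∈ Ico a b) (hs : s ≤ 1) :
    genInv (truncCDF F x) x b s ∈ {t | t ∈ Icc x b ∧ s ≤ truncCDF F x t} :=
  genInv_mem hx.2.le (continuousOn_truncCDF hFc hx.1)
    (by rwa [truncCDF_right hFb (hFm.apply_lt_one hFb hx)])

theorem monotoneOn_genInv_truncCDF (hFc : ContinuousOn F (Icc a b))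
    (hFm : StrictMonoOn F (Icc a b)) (hFb : F b = 1) (hx : x ∈ Ico a b) :
    MonotoneOn (genInv (truncCDF F x) x b) (Iic 1) := fun _ _ _ hs' hss' =>
  genInv_mono hx.2.le (continuousOn_truncCDF hFc hx.1)
    (by rwa [truncCDF_right hFb (hFm.apply_lt_one hFb hx)]) hss'

theorem genInv_truncCDF_lt_of_lt (hFc : ContinuousOn F (Icc a b))
    (hFm : StrictMonoOn F (Icc a b)) (hFb : F b = 1) (hx : x ∈ Ico a b) (hy : y ∈ Ico a b)
    (hxy : x < y) (hs : s ∈ Ioo 0 1) :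
    genInv (truncCDF F x) x b s < genInv (truncCDF F y) y b s := by
  set q := genInv (truncCDF F y) y b s
  obtain ⟨hq, hsq⟩ : q ∈ {t | t ∈ Icc y b ∧ s ≤ truncCDF F y t} :=
    genInv_truncCDF_mem hFc hFm hFb hy hs.2.le
  have hFx := hFm.apply_lt_one hFb hx
  have hxq : q ∈ Icc x b := ⟨hxy.le.trans hq.1, hq.2⟩
  -- `Φ(q|x) > Φ(q|y) ≥ s`, unless `q = b` where `Φ(b|x) = 1 > s`.
  have hs_lt : s < truncCDF F x q := by
    rcases hq.2.lt_or_eq with hqb | hqb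
    · exact hsq.trans_lt (truncCDF_lt_truncCDF (hFm ⟨hx.1, hx.2.le⟩ ⟨hy.1, hy.2.le⟩ hxy)
        (hFm.apply_lt_one hFb hy) (hFm.apply_lt_one hFb ⟨hx.1.trans hxq.1, hqb⟩))
    · rw [hqb, truncCDF_right hFb hFx]; exact hs.2
  have hcont := (continuousOn_truncCDF hFc hx.1).mono (Icc_subset_Icc_right hq.2)
  refine genInv_lt hxq hcont ?_ hs_lt
  rw [truncCDF, sub_self, zero_div]
  exact hs.1.le

end truncated

theorem MonotoneOn.intervalIntegrable_one_div {μ : Measure ℝ} [IsLocallyFiniteMeasure μ]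
    {k : ℝ → ℝ} {c d : ℝ}
    (hk : MonotoneOn k (uIcc c d)) (hk0 : ∀ s ∈ uIcc c d, 0 < k s) :
    IntervalIntegrable (fun s => 1 / k s) μ c d :=
  AntitoneOn.intervalIntegrable fun _ hs _ ht hst =>
    one_div_le_one_div_of_le (hk0 _ hs) (hk hs ht hst)

theorem integral_one_div_lt_integral_one_div {g h : ℝ → ℝ} {c d : ℝ} (hcd : c < d)
    (hg : MonotoneOn g (Icc c d)) (hh : MonotoneOn h (Icc c d))
    (hg0 : ∀ s ∈ Icc c d, 0 < g s) (hh0 : ∀ s ∈ Icc c d, 0 < h s)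
    (hlt : ∀ s ∈ Ioo c d, g s < h s) :
    ∫ s in c..d, 1 / h s < ∫ s in c..d, 1 / g s := by
  have hcd' := uIcc_of_le hcd.le
  have hgi : IntervalIntegrable (fun s => 1 / g s) volume c d :=
    MonotoneOn.intervalIntegrable_one_div (hcd' ▸ hg) (hcd' ▸ hg0)
  have hhi : IntervalIntegrable (fun s => 1 / h s) volume c d :=
    MonotoneOn.intervalIntegrable_one_div (hcd' ▸ hh) (hcd' ▸ hh0)
  rw [← sub_pos, ← intervalIntegral.integral_sub hgi hhi]
  refine intervalIntegral.intervalIntegral_pos_of_pos_on (hgi.sub hhi) (fun s hs => ?_) hcd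
  exact sub_pos.2 (one_div_lt_one_div_of_lt (hg0 s (Ioo_subset_Icc_self hs)) (hlt s hs))

theorem condQuantileIntegral_strictAnti_general (a b : ℝ) (ha : 0 < a)
    (F : ℝ → ℝ) (hFc : ContinuousOn F (Icc a b)) (hFm : StrictMonoOn F (Icc a b))
    (hFb : F b = 1)
    (Φ : ℝ → ℝ → ℝ) (hΦ : ∀ x ∈ Ico a b, ∀ v : ℝ, Φ v x = (F v - F x) / (1 - F x))
    (Φinv : ℝ → ℝ → ℝ)
    (hΦinv : ∀ x ∈ Ico a b, ∀ s : ℝ, Φinv s x = sInf {t | t ∈ Icc x b ∧ s ≤ Φ t x})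
    (I : ℝ → ℝ) (hI : ∀ x ∈ Ico a b, I x = ∫ s in (0:ℝ)..1, 1 / Φinv s x) :
    StrictAntiOn I (Ico a b) := by
  have hI' : ∀ x ∈ Ico a b, I x = ∫ s in (0:ℝ)..1, 1 / genInv (truncCDF F x) x b s :=
    fun x hx => by simp only [hI x hx, hΦinv x hx, hΦ x hx]; rfl
  have hmono : ∀ x ∈ Ico a b, MonotoneOn (genInv (truncCDF F x) x b) (Icc 0 1) := fun x hx =>
    (monotoneOn_genInv_truncCDF hFc hFm hFb hx).mono Icc_subset_Iic_self
  have hpos : ∀ x ∈ Ico a b, ∀ s ∈ Icc (0 : ℝ) 1, 0 < genInv (truncCDF F x) x b s :=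
    fun x hx s hs => ha.trans_le (hx.1.trans (genInv_truncCDF_mem hFc hFm hFb hx hs.2).1.1)
  intro x hx y hy hxy
  rw [hI' x hx, hI' y hy]
  exact integral_one_div_lt_integral_one_div one_pos (hmono x hx) (hmono y hy) (hpos x hx)
    (hpos y hy) fun s hs => genInv_truncCDF_lt_of_lt hFc hFm hFb hx hy hxy hs

/-- The reciprocal-quantile integral `I(x) = ∫₀¹ 1/Φ⁻¹(s|x) ds` of the distribution
conditional on values `≥ x` is strictly decreasing in the truncation point `x`. -/
theorem condQuantileIntegral_strictAnti (a b : ℝ) (ha : 0 < a) (hab : a < b)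
    (F : ℝ → ℝ) (hFc : ContinuousOn F (Icc a b)) (hFm : StrictMonoOn F (Icc a b))
    (hFa : F a = 0) (hFb : F b = 1)
    (Φ : ℝ → ℝ → ℝ) (hΦ : ∀ x ∈ Ico a b, ∀ v : ℝ, Φ v x = (F v - F x) / (1 - F x))
    (Φinv : ℝ → ℝ → ℝ)
    (hΦinv : ∀ x ∈ Ico a b, ∀ s : ℝ, Φinv s x = sInf {t | t ∈ Icc x b ∧ s ≤ Φ t x})
    (I : ℝ → ℝ) (hI : ∀ x ∈ Ico a b, I x = ∫ s in (0:ℝ)..1, 1 / Φinv s x) :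
    StrictAntiOn I (Ico a b) :=
  condQuantileIntegral_strictAnti_general a b ha F hFc hFm hFb Φ hΦ Φinv hΦinv I hI
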